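/- Let H be symmetric positive definite, and s, y vectors with sᵀy > 0, yᵀHy/(sᵀy) ≤ 1/μ₁ and sᵀs/(sᵀy) ≤ 1/μ₂ for positive constants μ₁, μ₂. Then the BFGS inverse update H⁺ = (I − ρ s yᵀ) H (I − ρ y sᵀ) + ρ s sᵀ with ρ = 1/(sᵀy) satisfies ‖H⁺‖ ≤ (‖H^{1/2}‖ + 1/√(μ₁μ₂))² + 1/μ₂ in spectral norm. -/

import Mathlib

open Matrix

noncomputable def specNorm {n : ℕ} (A : Matrix (Fin n) (Fin n) ℝ) : ℝ :=
  ‖Matrix.toEuclideanCLM (𝕜 := ℝ) (n := Fin n) A‖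

/-- The positive semidefinite square root, as `Matrix.PosSemidef.sqrt` was defined in the older Mathlib. -/
noncomputable def posSemidefSqrt {n : ℕ} {A : Matrix (Fin n) (Fin n) ℝ} (hA : A.PosSemidef) :
    Matrix (Fin n) (Fin n) ℝ :=
  hA.1.eigenvectorUnitary.1 * diagonal ((↑) ∘ (√·) ∘ hA.1.eigenvalues) *
    (star hA.1.eigenvectorUnitary : Matrix (Fin n) (Fin n) ℝ)

/-!
With `Q = H^{1/2}` and `ρ = 1/(sᵀy)`, the update factors as `H⁺ = MᵀM + ρ s sᵀ` where
`M = Q (I - ρ y sᵀ) = Q - ρ (Q y) sᵀ` is a rank-one perturbation of `Q`. Hence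
`‖H⁺‖ ≤ (‖Q‖ + ρ ‖Q y‖ ‖s‖)² + ρ ‖s‖²`, and the two curvature conditions bound
`ρ ‖Q y‖ ‖s‖ = √(yᵀHy/sᵀy) · √(sᵀs/sᵀy)` by `1/√(μ₁μ₂)` and `ρ ‖s‖² = sᵀs/sᵀy` by `1/μ₂`.
-/

open scoped MatrixOrder Matrix.Norms.L2Operator

section PosSemidefSqrt

variable {n : ℕ} {A : Matrix (Fin n) (Fin n) ℝ}

theorem posSemidefSqrt_eq_cfcSqrt (hA : A.PosSemidef) : posSemidefSqrt hA = CFC.sqrt A := by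
  rw [CFC.sqrt_eq_real_sqrt A hA.nonneg, cfcₙ_eq_cfc, hA.1.cfc_eq]
  rfl

theorem posSemidefSqrt_isHermitian (hA : A.PosSemidef) : (posSemidefSqrt hA).IsHermitian := by
  rw [posSemidefSqrt_eq_cfcSqrt]
  exact (CFC.sqrt_nonneg A).posSemidef.isHermitian

theorem posSemidefSqrt_transpose_mul_self (hA : A.PosSemidef) :
    (posSemidefSqrt hA)ᵀ * posSemidefSqrt hA = A := by
  rw [← conjTranspose_eq_transpose_of_trivial, (posSemidefSqrt_isHermitian hA).eq,
    posSemidefSqrt_eq_cfcSqrt, CFC.sqrt_mul_sqrt_self A hA.nonneg]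

end PosSemidefSqrt

theorem EuclideanSpace.norm_toLp_sq {n : Type*} [Fintype n] (x : n → ℝ) :
    ‖WithLp.toLp 2 x‖ ^ 2 = x ⬝ᵥ x := by
  rw [← real_inner_self_eq_norm_sq, EuclideanSpace.inner_toLp_toLp, star_trivial]

theorem EuclideanSpace.norm_toLp_mulVec_sq {m n : Type*} [Fintype m] [Fintype n]
    (Q : Matrix m n ℝ) (x : n → ℝ) :
    ‖WithLp.toLp 2 (Q *ᵥ x)‖ ^ 2 = x ⬝ᵥ (Qᵀ * Q) *ᵥ x := by
  rw [norm_toLp_sq, ← mulVec_mulVec, mulVec_transpose, dotProduct_comm x, dotProduct_mulVec]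

theorem Matrix.l2_opNorm_vecMulVec {𝕜 m n : Type*} [RCLike 𝕜] [Fintype m] [Fintype n]
    [DecidableEq n] (x : m → 𝕜) (y : n → 𝕜) :
    ‖vecMulVec x y‖ = ‖WithLp.toLp 2 x‖ * ‖WithLp.toLp 2 y‖ := by
  have h := InnerProductSpace.symm_toEuclideanLin_rankOne (𝕜 := 𝕜)
    (WithLp.toLp 2 x) (WithLp.toLp 2 (star y))
  rw [star_star] at h
  rw [l2_opNorm_def, LinearEquiv.trans_apply, ← h, LinearEquiv.apply_symm_apply]
  change ‖InnerProductSpace.rankOne 𝕜 (WithLp.toLp 2 x) (WithLp.toLp 2 (star y))‖ = _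
  simp [EuclideanSpace.norm_eq]

section BFGS

variable {n : Type*} [Fintype n] [DecidableEq n]

def bfgsInverseUpdate {R : Type*} [CommRing R] (H : Matrix n n R) (s y : n → R) (ρ : R) :
    Matrix n n R :=
  (1 - ρ • vecMulVec s y) * H * (1 - ρ • vecMulVec y s) + ρ • vecMulVec s s

theorem bfgsInverseUpdate_transpose_mul_self {R : Type*} [CommRing R] (Q : Matrix n n R)
    (s y : n → R) (ρ : R) :
    bfgsInverseUpdate (Qᵀ * Q) s y ρ =
      (Q - ρ • vecMulVec (Q *ᵥ y) s)ᵀ * (Q - ρ • vecMulVec (Q *ᵥ y) s) + ρ • vecMulVec s s := by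
  have hM : Q - ρ • vecMulVec (Q *ᵥ y) s = Q * (1 - ρ • vecMulVec y s) := by
    rw [mul_sub, mul_one, mul_smul_comm, mul_vecMulVec]
  rw [bfgsInverseUpdate, hM, transpose_mul, transpose_sub, transpose_one, transpose_smul,
    transpose_vecMulVec]
  simp only [mul_assoc]

theorem norm_bfgsInverseUpdate_transpose_mul_self_le (Q : Matrix n n ℝ) (s y : n → ℝ) {ρ : ℝ}
    (hρ : 0 ≤ ρ) :
    ‖bfgsInverseUpdate (Qᵀ * Q) s y ρ‖ ≤
      (‖Q‖ + ρ * (‖WithLp.toLp 2 (Q *ᵥ y)‖ * ‖WithLp.toLp 2 s‖)) ^ 2 +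
        ρ * ‖WithLp.toLp 2 s‖ ^ 2 := by
  set M := Q - ρ • vecMulVec (Q *ᵥ y) s
  have hM : ‖M‖ ≤ ‖Q‖ + ρ * (‖WithLp.toLp 2 (Q *ᵥ y)‖ * ‖WithLp.toLp 2 s‖) := by
    calc ‖M‖ ≤ ‖Q‖ + ‖ρ • vecMulVec (Q *ᵥ y) s‖ := norm_sub_le _ _
      _ = _ := by rw [norm_smul, Real.norm_of_nonneg hρ, l2_opNorm_vecMulVec]
  calc ‖bfgsInverseUpdate (Qᵀ * Q) s y ρ‖
      ≤ ‖Mᴴ * M‖ + ‖ρ • vecMulVec s s‖ := by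
        rw [bfgsInverseUpdate_transpose_mul_self, ← conjTranspose_eq_transpose_of_trivial]
        exact norm_add_le _ _
    _ = ‖M‖ ^ 2 + ρ * ‖WithLp.toLp 2 s‖ ^ 2 := by
        rw [l2_opNorm_conjTranspose_mul_self, norm_smul, Real.norm_of_nonneg hρ,
          l2_opNorm_vecMulVec, sq, sq]
    _ ≤ _ := by gcongr

end BFGS

theorem Real.mul_div_le_one_div_sqrt_mul {x z b μ₁ μ₂ : ℝ} (hx : 0 ≤ x) (hz : 0 ≤ z) (hb : 0 < b)
    (h₁ : x ^ 2 / b ≤ 1 / μ₁) (h₂ : z ^ 2 / b ≤ 1 / μ₂) : x * z / b ≤ 1 / √(μ₁ * μ₂) := by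
  have hxz : x * z / b = √(x ^ 2 / b * (z ^ 2 / b)) := by
    rw [show x ^ 2 / b * (z ^ 2 / b) = (x * z / b) ^ 2 by ring, Real.sqrt_sq (by positivity)]
  have hx₀ : 0 ≤ x ^ 2 / b := by positivity
  calc x * z / b ≤ √(1 / μ₁ * (1 / μ₂)) :=
        hxz ▸ Real.sqrt_le_sqrt (mul_le_mul h₁ h₂ (by positivity) (hx₀.trans h₁))
    _ = 1 / √(μ₁ * μ₂) := by rw [one_div_mul_one_div, one_div, Real.sqrt_inv, one_div]

theorem bfgs_H_norm_bound_general {n : ℕ} (H Hplus : Matrix (Fin n) (Fin n) ℝ)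
    (s y : Fin n → ℝ) (μ₁ μ₂ ρ : ℝ)
    (hH : H.PosDef)
    (hsy : 0 < s ⬝ᵥ y)
    (hcurv₁ : y ⬝ᵥ (H *ᵥ y) / (s ⬝ᵥ y) ≤ 1 / μ₁)
    (hcurv₂ : s ⬝ᵥ s / (s ⬝ᵥ y) ≤ 1 / μ₂)
    (hρ : ρ = 1 / (s ⬝ᵥ y))
    (hHplus : Hplus = (1 - ρ • vecMulVec s y) * H * (1 - ρ • vecMulVec y s)
      + ρ • vecMulVec s s) :
    specNorm Hplus ≤ (specNorm (posSemidefSqrt hH.posSemidef) + 1 / Real.sqrt (μ₁ * μ₂)) ^ 2 + 1 / μ₂ := by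
  set Q := posSemidefSqrt hH.posSemidef
  change ‖Hplus‖ ≤ (‖Q‖ + 1 / √(μ₁ * μ₂)) ^ 2 + 1 / μ₂
  have hQ : Qᵀ * Q = H := posSemidefSqrt_transpose_mul_self hH.posSemidef
  have hu : ‖WithLp.toLp 2 (Q *ᵥ y)‖ ^ 2 = y ⬝ᵥ (H *ᵥ y) := by
    rw [EuclideanSpace.norm_toLp_mulVec_sq, hQ]
  have hs : ‖WithLp.toLp 2 s‖ ^ 2 = s ⬝ᵥ s := EuclideanSpace.norm_toLp_sq s
  have hρ₀ : 0 ≤ ρ := hρ ▸ by positivity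
  have hcross : ρ * (‖WithLp.toLp 2 (Q *ᵥ y)‖ * ‖WithLp.toLp 2 s‖) ≤ 1 / √(μ₁ * μ₂) := by
    rw [hρ, one_div_mul_eq_div]
    exact Real.mul_div_le_one_div_sqrt_mul (norm_nonneg _) (norm_nonneg _) hsy
      (hu ▸ hcurv₁) (hs ▸ hcurv₂)
  have hrank : ρ * ‖WithLp.toLp 2 s‖ ^ 2 ≤ 1 / μ₂ := by
    rwa [hρ, one_div_mul_eq_div, hs]
  calc ‖Hplus‖
      ≤ (‖Q‖ + ρ * (‖WithLp.toLp 2 (Q *ᵥ y)‖ * ‖WithLp.toLp 2 s‖)) ^ 2 +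
          ρ * ‖WithLp.toLp 2 s‖ ^ 2 :=
        hHplus ▸ hQ ▸ norm_bfgsInverseUpdate_transpose_mul_self_le Q s y hρ₀
    _ ≤ _ := by gcongr

/-- Spectral-norm bound for the BFGS inverse update under the double-damping
curvature conditions: ‖H⁺‖ ≤ (‖H^{1/2}‖ + 1/√(μ₁μ₂))² + 1/μ₂. -/
theorem bfgs_H_norm_bound {n : ℕ} (H Hplus : Matrix (Fin n) (Fin n) ℝ)
    (s y : Fin n → ℝ) (μ₁ μ₂ ρ : ℝ)
    (hH : H.PosDef)
    (hμ₁ : 0 < μ₁) (hμ₂ : 0 < μ₂)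
    (hsy : 0 < s ⬝ᵥ y)
    (hcurv₁ : y ⬝ᵥ (H *ᵥ y) / (s ⬝ᵥ y) ≤ 1 / μ₁)
    (hcurv₂ : s ⬝ᵥ s / (s ⬝ᵥ y) ≤ 1 / μ₂)
    (hρ : ρ = 1 / (s ⬝ᵥ y))
    (hHplus : Hplus = (1 - ρ • vecMulVec s y) * H * (1 - ρ • vecMulVec y s)
      + ρ • vecMulVec s s) :
    specNorm Hplus ≤ (specNorm (posSemidefSqrt hH.posSemidef) + 1 / Real.sqrt (μ₁ * μ₂)) ^ 2 + 1 / μ₂ :=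
  bfgs_H_norm_bound_general H Hplus s y μ₁ μ₂ ρ hH hsy hcurv₁ hcurv₂ hρ hHplus
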